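/- For every n ≥ 4, the cycle C_n on n vertices satisfies ι_2(C_n) ≤ ⌊(n+4)/5⌋; in particular, the set {5i − 4 : 1 ≤ i ≤ ⌊(n+4)/5⌋} is an 𝓔_2-isolating set of C_n (with vertex set {1,…,n}, cyclically adjacent). Consequently, for n ≥ 4 with n ≠ 6, ι_2(C_n) ≤ 4n/14. -/

import Mathlib

/-!
Let `D` be the set of multiples of 5 in `Fin n`. Every vertex of `C_n` lies within distance 2 of
`D` (the last block wraps around to `0`), so `N[D]` dominates `C_n`. As `C_n` has maximum degree 2,
a vertex outside `N[D]` spends one of its two edges on `N[D]`, hence `C_n − N[D]` has maximum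
degree at most 1; but a connected graph with two edges has a vertex with two distinct neighbours.
The bound `4n/14` is the arithmetic `7 ⌊(n + 4)/5⌋ ≤ 2n` for `n ≥ 4`, `n ≠ 6`.
-/

open SimpleGraph

/-- `G` contains a copy of `H` as a (not necessarily induced) subgraph. -/
def SimpleGraph.ContainsCopy {V W : Type*} (G : SimpleGraph V) (H : SimpleGraph W) : Prop :=
  ∃ f : W ↪ V, ∀ a b, H.Adj a b → G.Adj (f a) (f b)

/-- The closed neighbourhood `N[D]` of a set `D` of vertices. -/
def SimpleGraph.closedNbhdSet {V : Type*} (G : SimpleGraph V) (D : Set V) : Set V :=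
  D ∪ ⋃ v ∈ D, G.neighborSet v

/-- `D` is an `F`-isolating set of `G`: the graph `G − N[D]` obtained by deleting the closed
neighbourhood of `D` contains no subgraph isomorphic to a member of the family `F`. -/
def SimpleGraph.IsIsolatingSet {V : Type*} (G : SimpleGraph V)
    (F : Set ((n : ℕ) × SimpleGraph (Fin n))) (D : Set V) : Prop :=
  ∀ H ∈ F, ¬ (G.induce (G.closedNbhdSet D)ᶜ).ContainsCopy H.2

/-- The `F`-isolation number of `G`: the minimum size of an `F`-isolating set. -/
noncomputable def SimpleGraph.isolationNumber {V : Type*} (G : SimpleGraph V)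
    (F : Set ((n : ℕ) × SimpleGraph (Fin n))) : ℕ :=
  sInf (Set.ncard '' {D : Set V | G.IsIsolatingSet F D})

/-- The family 𝓒 of all cycles `C_m`, `m ≥ 3`. -/
def CyclesFamily : Set ((n : ℕ) × SimpleGraph (Fin n)) :=
  {H | ∃ m : ℕ, 3 ≤ m ∧ H = ⟨m, SimpleGraph.cycleGraph m⟩}

/-- The family 𝓔_k of all connected graphs with at least `k` edges. -/
def EkFamily (k : ℕ) : Set ((n : ℕ) × SimpleGraph (Fin n)) :=
  {H | H.2.Connected ∧ k ≤ H.2.edgeSet.ncard}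

/-- The set of leaves (vertices of degree 1) of `G`. -/
def SimpleGraph.leafSet {V : Type*} (G : SimpleGraph V) : Set V :=
  {v | (G.neighborSet v).ncard = 1}

/-- `ℓ(G)`, the number of leaves of `G`. -/
noncomputable def SimpleGraph.numLeaves {V : Type*} (G : SimpleGraph V) : ℕ :=
  G.leafSet.ncard

namespace SimpleGraph

variable {V : Type*} {G : SimpleGraph V}

theorem mem_closedNbhdSet_iff {S : Set V} {v : V} :
    v ∈ G.closedNbhdSet S ↔ ∃ s ∈ S, s = v ∨ G.Adj s v := by
  simp only [closedNbhdSet, Set.mem_union, Set.mem_iUnion, mem_neighborSet, exists_prop]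
  constructor
  · rintro (hv | ⟨s, hs, hsv⟩)
    exacts [⟨v, hv, .inl rfl⟩, ⟨s, hs, .inr hsv⟩]
  · rintro ⟨s, hs, rfl | hsv⟩
    exacts [.inl hs, .inr ⟨s, hs, hsv⟩]

theorem Walk.eq_or_eq_of_neighborSet_subsingleton (hG : ∀ v, (G.neighborSet v).Subsingleton)
    {x u : V} (w : G.Walk x u) {y : V} (hxy : G.Adj x y) : u = x ∨ u = y := by
  induction w generalizing y with
  | nil => exact .inl rfl
  | cons hxv _ ih =>
    obtain rfl := hG _ hxv hxy
    exact (ih hxy.symm).symm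

theorem Connected.edgeSet_subsingleton (hG : G.Connected)
    (hnbr : ∀ v, (G.neighborSet v).Subsingleton) : G.edgeSet.Subsingleton := by
  intro e he e' he'
  induction e using Sym2.ind with | _ a b =>
  induction e' using Sym2.ind with | _ c d =>
  rw [mem_edgeSet] at he he'
  have hc := (hG.preconnected a c).some.eq_or_eq_of_neighborSet_subsingleton hnbr he
  have hd := (hG.preconnected a d).some.eq_or_eq_of_neighborSet_subsingleton hnbr he
  rw [Sym2.eq_iff]
  rcases hc with rfl | rfl <;> rcases hd with rfl | rfl <;> simp_all

theorem ContainsCopy.neighborSet_subsingleton {W : Type*} {H : SimpleGraph W}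
    (hGH : G.ContainsCopy H) (hG : ∀ v, (G.neighborSet v).Subsingleton) (w : W) :
    (H.neighborSet w).Subsingleton := by
  obtain ⟨f, hf⟩ := hGH
  exact fun a ha c hc => f.injective (hG (f w) (hf _ _ ha) (hf _ _ hc))

theorem not_containsCopy_of_mem_ekFamily_two (hG : ∀ v, (G.neighborSet v).Subsingleton)
    {H : (n : ℕ) × SimpleGraph (Fin n)} (hH : H ∈ EkFamily 2) : ¬ G.ContainsCopy H.2 := by
  intro hGH
  have hle := Set.ncard_le_one_iff_subsingleton.mpr
    (hH.1.edgeSet_subsingleton (hGH.neighborSet_subsingleton hG))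
  have := hH.2
  omega

theorem neighborSet_induce_compl_subsingleton [G.LocallyFinite] (hdeg : ∀ v, G.degree v ≤ 2)
    {S : Set V} (hS : G.closedNbhdSet S = Set.univ) (b : ↥Sᶜ) :
    ((G.induce Sᶜ).neighborSet b).Subsingleton := by
  classical
  intro a (hab : G.Adj b a) c (hbc : G.Adj b c)
  by_contra hac
  obtain ⟨s, hs, hsb⟩ := mem_closedNbhdSet_iff.mp (hS ▸ Set.mem_univ (b : V))
  have hbs : G.Adj b s := (hsb.resolve_left fun h => b.2 (h ▸ hs)).symm
  have hsa : s ≠ a := fun h => a.2 (h ▸ hs)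
  have hsc : s ≠ c := fun h => c.2 (h ▸ hs)
  have hac : (a : V) ≠ c := fun h => hac (Subtype.ext h)
  have hsub : ({(a : V), (c : V), s} : Finset V) ⊆ G.neighborFinset b := by
    simp [Finset.insert_subset_iff, hab, hbc, hbs]
  have := Finset.card_le_card hsub
  rw [Finset.card_eq_three.mpr ⟨_, _, _, hac, hsa.symm, hsc.symm, rfl⟩,
    card_neighborFinset_eq_degree] at this
  exact absurd (hdeg b) (by omega)

theorem isIsolatingSet_ekFamily_two [G.LocallyFinite] (hdeg : ∀ v, G.degree v ≤ 2) {D : Set V}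
    (hD : G.closedNbhdSet (G.closedNbhdSet D) = Set.univ) : G.IsIsolatingSet (EkFamily 2) D :=
  fun _ => not_containsCopy_of_mem_ekFamily_two (neighborSet_induce_compl_subsingleton hdeg hD)

theorem isolationNumber_le_ncard {F : Set ((n : ℕ) × SimpleGraph (Fin n))} {D : Set V}
    (hD : G.IsIsolatingSet F D) : G.isolationNumber F ≤ D.ncard :=
  Nat.sInf_le ⟨D, hD, rfl⟩

theorem cycleGraph_degree_le_two {n : ℕ} (v : Fin (n + 2)) :
    (cycleGraph (n + 2)).degree v ≤ 2 :=
  cycleGraph_degree_two_le ▸ Finset.card_le_two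

theorem cycleGraph_adj_of_val_add_one {n : ℕ} {u v : Fin n} (h : (u : ℕ) + 1 = v) :
    (cycleGraph n).Adj u v :=
  pathGraph_le_cycleGraph (pathGraph_adj.mpr (.inl h))

theorem cycleGraph_last_adj_zero (n : ℕ) : (cycleGraph (n + 2)).Adj (Fin.last (n + 1)) 0 :=
  cycleGraph_adj.mpr (.inr (by simp))

end SimpleGraph

-- The paper's vertices `5i − 4` on the labels `1, …, n` are the multiples of 5 among the
-- labels `0, …, n − 1` of `Fin n`.
def fifthVertices (n : ℕ) : Set (Fin n) :=
  {v | 5 ∣ (v : ℕ)}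

theorem closedNbhdSet_closedNbhdSet_fifthVertices (n : ℕ) :
    (cycleGraph (n + 2)).closedNbhdSet ((cycleGraph (n + 2)).closedNbhdSet (fifthVertices (n + 2)))
      = Set.univ := by
  refine Set.eq_univ_of_forall fun v => ?_
  have reach (d w : Fin (n + 2)) (hd : 5 ∣ (d : ℕ))
      (hdw : d = w ∨ (cycleGraph (n + 2)).Adj d w)
      (hwv : w = v ∨ (cycleGraph (n + 2)).Adj w v) :
      v ∈ (cycleGraph (n + 2)).closedNbhdSet
        ((cycleGraph (n + 2)).closedNbhdSet (fifthVertices (n + 2))) :=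
    mem_closedNbhdSet_iff.mpr ⟨w, mem_closedNbhdSet_iff.mpr ⟨d, hd, hdw⟩, hwv⟩
  have hv := v.isLt
  by_cases hlast : (v : ℕ) = n + 1
  · obtain rfl : v = Fin.last (n + 1) := Fin.ext hlast
    exact reach 0 0 (dvd_zero 5) (.inl rfl) (.inr (cycleGraph_last_adj_zero n).symm)
  have adj {a b : ℕ} (ha : a < n + 2) (hb : b < n + 2) (h : a + 1 = b) :
      (cycleGraph (n + 2)).Adj ⟨a, ha⟩ ⟨b, hb⟩ :=
    cycleGraph_adj_of_val_add_one h
  obtain h | h | h | h | h : (v : ℕ) % 5 = 0 ∨ (v : ℕ) % 5 = 1 ∨ (v : ℕ) % 5 = 2 ∨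
      (v : ℕ) % 5 = 3 ∨ (v : ℕ) % 5 = 4 := by omega
  · exact reach v v (by omega) (.inl rfl) (.inl rfl)
  · exact reach ⟨v - 1, by omega⟩ v (by dsimp only; omega) (.inr (adj _ hv (by omega)))
      (.inl rfl)
  · exact reach ⟨v - 2, by omega⟩ ⟨v - 1, by omega⟩ (by dsimp only; omega)
      (.inr (adj _ _ (by omega))) (.inr (adj _ hv (by omega)))
  · by_cases hend : (v : ℕ) + 2 = n + 2
    · exact reach 0 (Fin.last (n + 1)) (dvd_zero 5) (.inr (cycleGraph_last_adj_zero n).symm)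
        (.inr (adj hv (Fin.last (n + 1)).isLt (by simp; omega)).symm)
    · exact reach ⟨v + 2, by omega⟩ ⟨v + 1, by omega⟩ (by dsimp only; omega)
        (.inr (adj _ _ rfl).symm) (.inr (adj hv _ rfl).symm)
  · exact reach ⟨v + 1, by omega⟩ ⟨v + 1, by omega⟩ (by dsimp only; omega) (.inl rfl)
      (.inr (adj hv _ rfl).symm)

theorem ncard_fifthVertices_le (n : ℕ) : (fifthVertices n).ncard ≤ (n + 4) / 5 := by
  calc (fifthVertices n).ncard ≤ (Set.Iio ((n + 4) / 5)).ncard :=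
        Set.ncard_le_ncard_of_injOn (fun v => (v : ℕ) / 5)
          (fun v (hv : 5 ∣ (v : ℕ)) => by have := v.isLt; simp only [Set.mem_Iio]; omega)
          (fun u (hu : 5 ∣ (u : ℕ)) v (hv : 5 ∣ (v : ℕ)) huv =>
            Fin.ext (by simp only at huv; omega))
    _ = (n + 4) / 5 := Set.ncard_Iio_nat _

theorem setOf_eq_fifthVertices (n : ℕ) :
    {v : Fin n | ∃ i : ℕ, 1 ≤ i ∧ i ≤ (n + 4) / 5 ∧ (v : ℕ) + 1 = 5 * i - 4} =
      fifthVertices n := by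
  ext v
  have := v.isLt
  constructor
  · rintro ⟨i, -, -, h⟩
    show 5 ∣ (v : ℕ)
    omega
  · intro (h : 5 ∣ (v : ℕ))
    exact ⟨v / 5 + 1, by omega, by omega, by omega⟩

theorem stmt_12 (n : ℕ) (hn : 4 ≤ n) :
    (SimpleGraph.cycleGraph n).IsIsolatingSet (EkFamily 2)
      {v : Fin n | ∃ i : ℕ, 1 ≤ i ∧ i ≤ (n + 4) / 5 ∧ (v : ℕ) + 1 = 5 * i - 4} ∧
    (SimpleGraph.cycleGraph n).isolationNumber (EkFamily 2) ≤ (n + 4) / 5 ∧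
    (n ≠ 6 →
      ((SimpleGraph.cycleGraph n).isolationNumber (EkFamily 2) : ℚ) ≤ 4 * n / 14) := by
  obtain ⟨m, rfl⟩ : ∃ m, n = m + 2 := ⟨n - 2, by omega⟩
  have hD : (cycleGraph (m + 2)).IsIsolatingSet (EkFamily 2) (fifthVertices (m + 2)) :=
    isIsolatingSet_ekFamily_two cycleGraph_degree_le_two
      (closedNbhdSet_closedNbhdSet_fifthVertices m)
  have hle : (cycleGraph (m + 2)).isolationNumber (EkFamily 2) ≤ (m + 2 + 4) / 5 :=
    (isolationNumber_le_ncard hD).trans (ncard_fifthVertices_le _)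
  refine ⟨setOf_eq_fifthVertices _ ▸ hD, hle, fun h6 => ?_⟩
  rw [le_div_iff₀ (by norm_num)]
  exact_mod_cast (by omega : (cycleGraph (m + 2)).isolationNumber (EkFamily 2) * 14 ≤ 4 * (m + 2))
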